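/- For every i ∈ ℕ, every p ∈ (0,1] and every n ∈ ℕ, the probability that the right edges of the i-th strengthened process and of the oriented percolation process differ at time n satisfies P( _pX̄^{(i)}_n ≠ _pX̄^{(∞)}_n ) ≤ (1 − p^n)^{i+1}. -/

import Mathlib

open MeasureTheory ProbabilityTheory Filter Set
open scoped ENat ENNReal

noncomputable section

/-- Direction of a bond: `true` = right (`+1`), `false` = left (`-1`). -/
def dir (j : Bool) : ℤ := if j then 1 else -1

/-- An environment: a realization of the family of uniform random variables
`ξ^j_{n,m}`, indexed by time `n`, space `m` and direction `j`. -/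
abbrev Env := ℕ → ℤ → Bool → ℝ

/-- The bond from site `(n,m)` in direction `j` is open at level `p`,
i.e. the Bernoulli variable `_pξ^j_{n,m} = 1_{ξ^j_{n,m} ≤ p}` equals `1`. -/
def bondOpen (p : ℝ) (u : Env) (n : ℕ) (m : ℤ) (j : Bool) : Bool :=
  @decide (u n m j ≤ p) (Classical.propDecidable _)

/-- The position of the right edge after one step from configuration `c` at time `n`:
`sup { m + j : c m = 1, bond (n,m,j) open }`. -/
def nextEdge (p : ℝ) (u : Env) (n : ℕ) (c : ℤ → Bool) : ℤ :=
  sSup {x : ℤ | ∃ m j, c m = true ∧ bondOpen p u n m j = true ∧ x = m + dir j}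

/-- Forced (re)infection indicator for a site lying at (even) distance `d`
behind the new edge, when `d > 2i`; for `i = ∞` there is no forced infection. -/
def forced (i : ℕ∞) (d : ℤ) : Bool :=
  @decide (Even d ∧ 2 * i < (d.toNat : ℕ∞)) (Classical.propDecidable _)

/-- The strengthened discrete-time contact process (SDTCP) of order `i ∈ ℕ ∪ {∞}`,
with infection parameter `p`, environment `u`, and initial configuration `η`. -/
def Xproc (i : ℕ∞) (p : ℝ) (u : Env) (η : ℤ → Bool) : ℕ → ℤ → Bool
  | 0 => η
  | n + 1 => fun m =>
      (Xproc i p u η n (m - 1) && bondOpen p u n (m - 1) true) ||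
      (Xproc i p u η n (m + 1) && bondOpen p u n (m + 1) false) ||
      forced i (nextEdge p u n (Xproc i p u η n) - m)

/-- The right edge process, with the convention `edge 0 = 0`. -/
def edge (i : ℕ∞) (p : ℝ) (u : Env) (η : ℤ → Bool) : ℕ → ℤ
  | 0 => 0
  | n + 1 => nextEdge p u n (Xproc i p u η n)

/-- The standard initial configuration `1_{· ≤ 0}` on the even sites. -/
def η₀ : ℤ → Bool := fun m => @decide (m ≤ 0 ∧ Even m) (Classical.propDecidable _)

/-- States of the induced Markov chain of order `i`: configurations of the `i`
sites at distances `2, 4, …, 2i` behind the right edge. -/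
abbrev IMCState (i : ℕ) := Fin i → Bool

/-- The induced Markov chain: `Y n (j) = X n (edge n − 2(j+1))`. -/
def Yproc (i : ℕ) (p : ℝ) (u : Env) (η : ℤ → Bool) (n : ℕ) : IMCState i :=
  fun j => Xproc (i : ℕ∞) p u η n (edge (i : ℕ∞) p u η n - 2 * ((j : ℤ) + 1))

/-- The initial configuration `η_σ` associated with a state `σ` of the induced
Markov chain: edge at `0`, configuration `σ` at `−2, …, −2i`, everything
infected below `−2i`, everything healthy above `0`. -/
def ησ (i : ℕ) (σ : IMCState i) : ℤ → Bool := fun m =>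
  @decide (Even m ∧ (m = 0 ∨ m < -(2 * (i : ℤ)) ∨
      ∃ j : Fin i, m = -(2 * ((j : ℤ) + 1)) ∧ σ j = true))
    (Classical.propDecidable _)

variable {Ω : Type*}

/-- The probabilistic set-up: `ℙ` is a probability measure and the `ξ^j_{n,m}`
are i.i.d. random variables, uniformly distributed on `[0,1]`. -/
def UniformBonds [MeasureSpace Ω] (ξ : Ω → Env) : Prop :=
  IsProbabilityMeasure (ℙ : Measure Ω) ∧
  (∀ n m j, Measurable fun ω => ξ ω n m j) ∧
  iIndepFun (β := fun _ : ℕ × ℤ × Bool => ℝ)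
    (fun v ω => ξ ω v.1 v.2.1 v.2.2) ℙ ∧
  ∀ n m j, (ℙ : Measure Ω).map (fun ω => ξ ω n m j)
      = (volume : Measure ℝ).restrict (Set.Icc 0 1)

/-- Transition probability `q^{(i)}_{στ}(p)` of the induced Markov chain:
the probability that one step of the chain started from state `σ` leads to `τ`. -/
def kernel [MeasureSpace Ω] (ξ : Ω → Env) (i : ℕ) (p : ℝ) (σ τ : IMCState i) : ℝ :=
  (ℙ {ω | Yproc i p (ξ ω) (ησ i σ) 1 = τ}).toReal

/-- `π` is a stationary probability distribution for the induced Markov chain. -/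
def IsStationaryDist [MeasureSpace Ω] (ξ : Ω → Env) (i : ℕ) (p : ℝ)
    (π : IMCState i → ℝ) : Prop :=
  (∀ σ, 0 ≤ π σ) ∧ (∑ σ, π σ = 1) ∧
    ∀ τ, (∑ σ, π σ * kernel ξ i p σ τ) = π τ

/-- The mean jump `M^{(i)}_σ(p)` of the right edge from state `σ`
(Definition 2.4): `Σ_k Σ_τ (1 − 2k) P^{(i)}_{(σ,τ,k)}(p)`. -/
def meanJump [MeasureSpace Ω] (ξ : Ω → Env) (i : ℕ) (p : ℝ) (σ : IMCState i) : ℝ :=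
  ∑' k : ℕ, ∑ τ : IMCState i, (1 - 2 * (k : ℝ)) *
    (ℙ {ω | edge (i : ℕ∞) p (ξ ω) (ησ i σ) 1 = 1 - 2 * (k : ℤ) ∧
        Yproc i p (ξ ω) (ησ i σ) 1 = τ}).toReal

/-- The mean edge drift `M^{(i)}(p)` computed from a stationary measure `π`
(Definition 2.5). -/
def meanDrift [MeasureSpace Ω] (ξ : Ω → Env) (i : ℕ) (p : ℝ)
    (π : IMCState i → ℝ) : ℝ :=
  ∑ σ, meanJump ξ i p σ * π σ

/-- `a ∈ ℝ ∪ {±∞}` is the almost sure asymptotic speed of the right edge of the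
process of order `i ∈ ℕ ∪ {∞}` started from `1_{· ≤ 0}`. -/
def IsEdgeSpeed [MeasureSpace Ω] (ξ : Ω → Env) (i : ℕ∞) (p : ℝ) (a : EReal) : Prop :=
  ∀ᵐ ω ∂ℙ, Tendsto (fun n : ℕ => (((edge i p (ξ ω) η₀ n : ℤ) : ℝ) / n : EReal))
    atTop (nhds a)

/-- `pc i = p_c^{(i)}` is, for each `i ∈ ℕ`, a root in `(0,1]` of the mean edge
drift `M^{(i)}` (computed from a stationary measure of the induced chain). -/
def IsCriticalSeq [MeasureSpace Ω] (ξ : Ω → Env) (pc : ℕ → ℝ) : Prop :=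
  ∀ i, pc i ∈ Set.Ioc (0 : ℝ) 1 ∧
    ∃ π, IsStationaryDist ξ i (pc i) π ∧ meanDrift ξ i (pc i) π = 0

/-! If for some `k ≤ i` every right bond `(t, t - 2k) → (t + 1, t + 1 - 2k)` with `t < n` is
open, then the site `t - 2k` is infected at every time `t ≤ n`, so the right edge is at most
`2k ≤ 2i` ahead of it. Forced infections of the order-`i` process happen only more than `2i`
behind the edge, hence strictly left of `t - 2k`: the two processes agree on `[t - 2k, ∞)` and
have the same right edge. The diagonals `k = 0, …, i` use disjoint sets of bonds and each is
entirely open with probability `pⁿ`, so by independence all of them fail with probability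
`(1 - pⁿ)^{i+1}`. -/

lemma dir_le_one (j : Bool) : dir j ≤ 1 := by
  cases j <;> simp [dir]

lemma bondOpen_eq_true {p : ℝ} {u : Env} {n : ℕ} {m : ℤ} {j : Bool} :
    bondOpen p u n m j = true ↔ u n m j ≤ p := by
  simp [bondOpen]

lemma forced_top (d : ℤ) : forced ⊤ d = false := by
  simp [forced]

lemma forced_natCast_eq_false {i : ℕ} {d : ℤ} (h : d ≤ 2 * i) : forced i d = false := by
  simp only [forced, decide_eq_false_iff_not, not_and, not_lt]
  intro _
  exact_mod_cast (show d.toNat ≤ 2 * i by omega)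

lemma one_le_of_forced {i : ℕ∞} {d : ℤ} (h : forced i d = true) : 1 ≤ d := by
  simp only [forced, decide_eq_true_eq] at h
  by_contra! hd
  simp [Int.toNat_of_nonpos (by omega : d ≤ 0)] at h

lemma η₀_le {m : ℤ} (h : η₀ m = true) : m ≤ 0 := by
  simp only [η₀, decide_eq_true_eq] at h
  exact h.1

lemma η₀_neg_two_mul (k : ℕ) : η₀ (-(2 * k)) = true := by
  simp only [η₀, decide_eq_true_eq]
  exact ⟨by omega, ⟨-(k : ℤ), by ring⟩⟩

section NextEdge

variable {p : ℝ} {u : Env} {n : ℕ} {c c' : ℤ → Bool} {a b : ℤ}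

def openBondTargets (p : ℝ) (u : Env) (n : ℕ) (c : ℤ → Bool) : Set ℤ :=
  {x : ℤ | ∃ m j, c m = true ∧ bondOpen p u n m j = true ∧ x = m + dir j}

lemma nextEdge_eq_sSup : nextEdge p u n c = sSup (openBondTargets p u n c) := rfl

lemma add_one_mem_openBondTargets (ha : c a = true) (hopen : bondOpen p u n a true = true) :
    a + 1 ∈ openBondTargets p u n c :=
  ⟨a, true, ha, hopen, rfl⟩

lemma bddAbove_openBondTargets (hc : ∀ m, c m = true → m ≤ b) :
    BddAbove (openBondTargets p u n c) :=
  ⟨b + 1, by rintro _ ⟨m, j, hm, -, rfl⟩; linarith [hc m hm, dir_le_one j]⟩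

-- `hb` accounts for `sSup ∅ = 0` in `ℤ`.
lemma nextEdge_le (hb : 0 ≤ b) (hc : ∀ m, c m = true → m + 1 ≤ b) : nextEdge p u n c ≤ b := by
  rw [nextEdge_eq_sSup]
  rcases (openBondTargets p u n c).eq_empty_or_nonempty with h | h
  · rw [h, Int.csSup_empty]
    exact hb
  · refine csSup_le h ?_
    rintro _ ⟨m, j, hm, -, rfl⟩
    linarith [hc m hm, dir_le_one j]

lemma nextEdge_le_of_agree (hc : ∀ m, c m = true → m ≤ b) (hc' : ∀ m, c' m = true → m ≤ b)
    (ha : c a = true) (hopen : bondOpen p u n a true = true)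
    (hagree : ∀ m, a ≤ m → c m = c' m) : nextEdge p u n c ≤ nextEdge p u n c' := by
  have ha1 := add_one_mem_openBondTargets ha hopen
  have hle : a + 1 ≤ nextEdge p u n c := le_csSup (bddAbove_openBondTargets hc) ha1
  obtain ⟨m, j, hm, hj, hx⟩ := Int.csSup_mem ⟨_, ha1⟩ (bddAbove_openBondTargets hc)
  have ham : a ≤ m := by
    rw [nextEdge_eq_sSup, hx] at hle
    linarith [dir_le_one j]
  exact le_csSup (bddAbove_openBondTargets hc') ⟨m, j, hagree m ham ▸ hm, hj, hx⟩

lemma nextEdge_eq_of_agree (hc : ∀ m, c m = true → m ≤ b) (hc' : ∀ m, c' m = true → m ≤ b)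
    (ha : c a = true) (hopen : bondOpen p u n a true = true)
    (hagree : ∀ m, a ≤ m → c m = c' m) : nextEdge p u n c = nextEdge p u n c' :=
  le_antisymm (nextEdge_le_of_agree hc hc' ha hopen hagree)
    (nextEdge_le_of_agree hc' hc (hagree a le_rfl ▸ ha) hopen fun m hm => (hagree m hm).symm)

end NextEdge

def OpenDiagonal (p : ℝ) (u : Env) (n k : ℕ) : Prop :=
  ∀ t < n, bondOpen p u t ((t : ℤ) - 2 * k) true = true

section Coupling

variable {p : ℝ} {u : Env} {η : ℤ → Bool}

lemma Xproc_le {i : ℕ∞} (hη : ∀ m, η m = true → m ≤ 0) :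
    ∀ t m, Xproc i p u η t m = true → m ≤ t := by
  intro t
  induction t with
  | zero => exact_mod_cast hη
  | succ t ih =>
    intro m h
    simp only [Xproc, Bool.or_eq_true, Bool.and_eq_true] at h
    rcases h with (⟨h, -⟩ | ⟨h, -⟩) | hf
    · have := ih _ h; push_cast; omega
    · have := ih _ h; push_cast; omega
    · have hedge : nextEdge p u t (Xproc i p u η t) ≤ t + 1 :=
        nextEdge_le (by positivity) fun m' hm' => by linarith [ih m' hm']
      have := one_le_of_forced hf
      push_cast; omega

lemma Xproc_eqOn_of_openDiagonal {i k : ℕ} (hk : k ≤ i) (hη : ∀ m, η m = true → m ≤ 0)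
    (hηk : η (-(2 * k)) = true) {n : ℕ} (hopen : OpenDiagonal p u n k) :
    (∀ m, (n : ℤ) - 2 * k ≤ m → Xproc i p u η n m = Xproc ⊤ p u η n m) ∧
      Xproc ⊤ p u η n ((n : ℤ) - 2 * k) = true := by
  induction n with
  | zero => exact ⟨fun _ _ => rfl, by simpa [Xproc] using hηk⟩
  | succ t ih =>
    obtain ⟨hagree, hdiag⟩ := ih fun s hs => hopen s (by omega)
    have hbond := hopen t (by omega)
    have hedge : nextEdge p u t (Xproc i p u η t) ≤ t + 1 :=
      nextEdge_le (by positivity) fun m hm => by linarith [Xproc_le hη t m hm]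
    refine ⟨fun m hm => ?_, ?_⟩
    · push_cast at hm
      simp only [Xproc]
      rw [hagree (m - 1) (by omega), hagree (m + 1) (by omega), forced_top,
        forced_natCast_eq_false (by omega)]
    · simp only [Xproc]
      rw [show ((t + 1 : ℕ) : ℤ) - 2 * k - 1 = t - 2 * k by push_cast; ring, hdiag, hbond]
      simp

lemma edge_eq_edge_top_of_openDiagonal {i k n : ℕ} (hk : k ≤ i)
    (hη : ∀ m, η m = true → m ≤ 0) (hηk : η (-(2 * k)) = true) (hopen : OpenDiagonal p u n k) :
    edge i p u η n = edge ⊤ p u η n := by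
  cases n with
  | zero => rfl
  | succ t =>
    obtain ⟨hagree, hdiag⟩ :=
      Xproc_eqOn_of_openDiagonal (n := t) hk hη hηk fun s hs => hopen s (by omega)
    exact nextEdge_eq_of_agree (Xproc_le hη t) (Xproc_le hη t) ((hagree _ le_rfl).trans hdiag)
      (hopen t (by omega)) hagree

end Coupling

namespace ProbabilityTheory

variable {ι κ : Type*} [MeasurableSpace Ω] {μ : Measure Ω}

lemma iIndepFun.iIndepSet_preimage {β : ι → Type*} {m : ∀ i, MeasurableSpace (β i)}
    {f : ∀ i, Ω → β i} (hf : iIndepFun f μ) {t : ∀ i, Set (β i)} (ht : ∀ i, MeasurableSet (t i)) :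
    iIndepSet (fun i => f i ⁻¹' t i) μ :=
  (iIndepSet_iff_iIndep _ _).2 <| iIndep_of_iIndep_of_le hf.iIndep fun i =>
    MeasurableSpace.generateFrom_le <| by rintro _ rfl; exact ⟨t i, ht i, rfl⟩

lemma iIndepSet.iIndepSet_biInter {s : ι → Set Ω} (h : iIndepSet s μ)
    (hs : ∀ i, MeasurableSet (s i)) {S : κ → Finset ι}
    (hS : Pairwise fun k l => Disjoint (S k) (S l)) :
    iIndepSet (fun k => ⋂ i ∈ S k, s i) μ := by
  classical
  refine (iIndepSet_iff_meas_biInter fun k => Finset.measurableSet_biInter _ fun i _ => hs i).2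
    fun K => ?_
  rw [← Finset.set_biInter_biUnion, h.meas_biInter, Finset.prod_biUnion (hS.set_pairwise _)]
  exact Finset.prod_congr rfl fun k _ => (h.meas_biInter _).symm

lemma iIndepSet.measure_biInter_compl {s : ι → Set Ω} (h : iIndepSet s μ) (K : Finset ι) :
    μ (⋂ i ∈ K, (s i)ᶜ) = ∏ i ∈ K, μ (s i)ᶜ :=
  ((iIndepSet_iff_iIndep _ _).1 h).meas_biInter fun _ _ =>
    (MeasurableSpace.measurableSet_generateFrom (mem_singleton _)).compl

end ProbabilityTheory

section Bonds

variable {ξ : Ω → Env} {p : ℝ}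

lemma setOf_bondOpen_eq_preimage (n : ℕ) (m : ℤ) (j : Bool) :
    {ω | bondOpen p (ξ ω) n m j = true} = (fun ω => ξ ω n m j) ⁻¹' Iic p := by
  ext
  simp [bondOpen_eq_true]

lemma setOf_openDiagonal_eq (n k : ℕ) :
    {ω | OpenDiagonal p (ξ ω) n k} = ⋂ v ∈ ({k} ×ˢ Finset.range n : Finset (ℕ × ℕ)),
      {ω | bondOpen p (ξ ω) v.2 ((v.2 : ℤ) - 2 * v.1) true = true} := by
  ext ω
  simp [OpenDiagonal]

variable [MeasureSpace Ω]

lemma measurableSet_bondOpen (hξ : UniformBonds ξ) (n : ℕ) (m : ℤ) (j : Bool) :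
    MeasurableSet {ω | bondOpen p (ξ ω) n m j = true} := by
  rw [setOf_bondOpen_eq_preimage]
  exact hξ.2.1 n m j measurableSet_Iic

lemma measure_bondOpen (hξ : UniformBonds ξ) (hp : p ≤ 1) (n : ℕ) (m : ℤ) (j : Bool) :
    ℙ {ω | bondOpen p (ξ ω) n m j = true} = ENNReal.ofReal p := by
  have hIic : Iic p ∩ Icc (0 : ℝ) 1 = Icc 0 p := by
    ext x
    simp only [mem_inter_iff, mem_Iic, mem_Icc]
    grind
  rw [setOf_bondOpen_eq_preimage, ← Measure.map_apply (hξ.2.1 n m j) measurableSet_Iic,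
    hξ.2.2.2 n m j, Measure.restrict_apply measurableSet_Iic, hIic, Real.volume_Icc, sub_zero]

lemma iIndepSet_diagonalBondOpen (hξ : UniformBonds ξ) (p : ℝ) :
    iIndepSet (fun v : ℕ × ℕ =>
      {ω | bondOpen p (ξ ω) v.2 ((v.2 : ℤ) - 2 * v.1) true = true}) ℙ := by
  have hinj : Function.Injective fun v : ℕ × ℕ => (v.2, (v.2 : ℤ) - 2 * v.1, true) := by
    rintro ⟨k, t⟩ ⟨k', t'⟩ h
    simp only [Prod.mk.injEq] at h
    ext <;> omega
  simp only [setOf_bondOpen_eq_preimage]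
  exact (hξ.2.2.1.precomp hinj).iIndepSet_preimage fun _ => measurableSet_Iic

lemma measurableSet_openDiagonal (hξ : UniformBonds ξ) (n k : ℕ) :
    MeasurableSet {ω | OpenDiagonal p (ξ ω) n k} := by
  rw [setOf_openDiagonal_eq]
  exact Finset.measurableSet_biInter _ fun _ _ => measurableSet_bondOpen hξ _ _ _

lemma iIndepSet_openDiagonal (hξ : UniformBonds ξ) (n : ℕ) :
    iIndepSet (fun k => {ω | OpenDiagonal p (ξ ω) n k}) ℙ := by
  simp only [setOf_openDiagonal_eq]
  exact (iIndepSet_diagonalBondOpen hξ p).iIndepSet_biInter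
    (fun _ => measurableSet_bondOpen hξ _ _ _)
    fun k l hkl => Finset.disjoint_product.2 (Or.inl (Finset.disjoint_singleton.2 hkl))

lemma measure_openDiagonal (hξ : UniformBonds ξ) (hp : p ≤ 1) (n k : ℕ) :
    ℙ {ω | OpenDiagonal p (ξ ω) n k} = ENNReal.ofReal p ^ n := by
  rw [setOf_openDiagonal_eq, (iIndepSet_diagonalBondOpen hξ p).meas_biInter]
  simp [measure_bondOpen hξ hp]

end Bonds

/-- For every `i ∈ ℕ`, every `p ∈ (0,1]` and every `n ∈ ℕ`, the probability
that the right edges of the `i`-th strengthened process and of oriented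
percolation differ at time `n` is at most `(1 − pⁿ)^{i+1}`. -/
theorem edge_differ_prob_bound {Ω : Type*} [MeasureSpace Ω] (ξ : Ω → Env)
    (hξ : UniformBonds ξ) (i : ℕ) (p : ℝ) (hp : p ∈ Set.Ioc (0 : ℝ) 1) (n : ℕ) :
    (ℙ {ω | edge (i : ℕ∞) p (ξ ω) η₀ n ≠ edge ⊤ p (ξ ω) η₀ n}).toReal
      ≤ (1 - p ^ n) ^ (i + 1) := by
  have : IsProbabilityMeasure (ℙ : Measure Ω) := hξ.1
  have hsub : {ω | edge (i : ℕ∞) p (ξ ω) η₀ n ≠ edge ⊤ p (ξ ω) η₀ n}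
      ⊆ ⋂ k ∈ Finset.range (i + 1), {ω | OpenDiagonal p (ξ ω) n k}ᶜ := by
    intro ω hω
    simp only [mem_iInter₂, Finset.mem_range, mem_compl_iff, mem_ofPred_eq]
    exact fun k hk hopen => hω <|
      edge_eq_edge_top_of_openDiagonal (by omega) (fun _ => η₀_le) (η₀_neg_two_mul k) hopen
  have hall : ℙ (⋂ k ∈ Finset.range (i + 1), {ω | OpenDiagonal p (ξ ω) n k}ᶜ)
      = (1 - ENNReal.ofReal p ^ n) ^ (i + 1) := by
    rw [(iIndepSet_openDiagonal hξ n).measure_biInter_compl]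
    simp [prob_compl_eq_one_sub (measurableSet_openDiagonal hξ n _), measure_openDiagonal hξ hp.2]
  have hpn : ENNReal.ofReal p ^ n ≤ 1 := pow_le_one₀ zero_le (ENNReal.ofReal_le_one.2 hp.2)
  calc (ℙ {ω | edge (i : ℕ∞) p (ξ ω) η₀ n ≠ edge ⊤ p (ξ ω) η₀ n}).toReal
      ≤ (ℙ (⋂ k ∈ Finset.range (i + 1), {ω | OpenDiagonal p (ξ ω) n k}ᶜ)).toReal :=
        ENNReal.toReal_mono (measure_ne_top _ _) (measure_mono hsub)
    _ = (1 - p ^ n) ^ (i + 1) := by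
      rw [hall, ENNReal.toReal_pow, ENNReal.toReal_sub_of_le hpn ENNReal.one_ne_top,
        ENNReal.toReal_pow, ENNReal.toReal_ofReal hp.1.le, ENNReal.toReal_one]
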